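/- Strict convexity and unique minimizer of the full sequential cost in the linear case: let Q_x, R_y, Q_θ be positive definite real matrices of sizes d_x×d_x, d_y×d_y, d_θ×d_θ respectively, let F_x ∈ ℝ^{d_x×d_x}, F_θ ∈ ℝ^{d_x×d_θ}, H ∈ ℝ^{d_y×d_x}, fix initial values x₀ ∈ ℝ^{d_x}, θ₀ ∈ ℝ^{d_θ} and measurements y₁, …, y_N ∈ ℝ^{d_y}, and define L_N(x₁, …, x_N, θ₁, …, θ_N) = (1/2)·Σ_{i=1}^{N} [ (x_i − F_x x_{i−1} − F_θ θ_{i−1})ᵀ Q_x⁻¹ (x_i − F_x x_{i−1} − F_θ θ_{i−1}) + (y_i − H x_i)ᵀ R_y⁻¹ (y_i − H x_i) + (θ_i − θ_{i−1})ᵀ Q_θ⁻¹ (θ_i − θ_{i−1}) ]. Then L_N is a strictly convex function of (x₁, …, x_N, θ₁, …, θ_N) ∈ (ℝ^{d_x})^N × (ℝ^{d_θ})^N and possesses a unique global minimizer. -/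

import Mathlib

/-!
`L` is half of a positive definite quadratic form (a block-diagonal form built from
`Qx⁻¹`, `Ry⁻¹`, `Qθ⁻¹`) evaluated at the stacked residuals, which depend affinely on the
trajectory. The linear part of that affine map is injective: if it vanishes, the recursions
`θᵢ = θᵢ₋₁` and `xᵢ = Fx xᵢ₋₁ + Fθ θᵢ₋₁`, started from `0`, force the whole trajectory to vanish.
A positive definite quadratic form is strictly convex, and strict convexity survives
precomposition with an injective affine map. A minimizer exists because the normal equations
are solvable: the polar form pulled back along the residual map is nondegenerate on a
finite-dimensional space, hence identifies it with its dual. Uniqueness follows from strict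
convexity.
-/

open Matrix

theorem QuadraticMap.map_smul_add_smul_of_add_eq_one {R M N : Type*} [CommRing R]
    [AddCommGroup M] [Module R M] [AddCommGroup N] [Module R N] (Q : QuadraticMap R M N)
    (x y : M) {a b : R} (hab : a + b = 1) :
    Q (a • x + b • y) = a • Q x + b • Q y - (a * b) • Q (x - y) := by
  have hcombo : Q (a • x + b • y) = (a * a) • Q x + (b * b) • Q y + (a * b) • polar Q x y := by
    have h : polar Q (a • x) (b • y) = (a * b) • polar Q x y := by
      rw [Q.polar_smul_left, Q.polar_smul_right, smul_smul]
    rw [← QuadraticMap.map_smul, ← QuadraticMap.map_smul, ← h, polar]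
    abel
  have hsub : Q (x - y) = Q x + Q y - polar Q x y := by
    have h := Q.polar_neg_right x y
    rw [polar, QuadraticMap.map_neg, ← sub_eq_add_neg] at h
    rw [← neg_neg (polar Q x y), ← h]
    abel
  obtain rfl : b = 1 - a := by rw [← hab]; ring
  rw [hcombo, hsub]
  module

theorem QuadraticMap.PosDef.strictConvexOn {𝕜 M : Type*} [Field 𝕜] [LinearOrder 𝕜]
    [IsStrictOrderedRing 𝕜] [AddCommGroup M] [Module 𝕜 M] {Q : QuadraticForm 𝕜 M}
    (hQ : Q.PosDef) : StrictConvexOn 𝕜 Set.univ Q := by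
  refine ⟨convex_univ, fun x _ y _ hxy a b ha hb hab => ?_⟩
  rw [Q.map_smul_add_smul_of_add_eq_one x y hab]
  have := hQ (x - y) (sub_ne_zero.mpr hxy)
  simp only [smul_eq_mul]
  nlinarith [mul_pos ha hb]

theorem StrictConvexOn.comp_affineMap_of_injective {𝕜 E F β : Type*} [Ring 𝕜]
    [PartialOrder 𝕜] [AddCommGroup E] [AddCommGroup F] [Module 𝕜 E] [Module 𝕜 F]
    [AddCommMonoid β] [PartialOrder β] [SMul 𝕜 β] {f : F → β} {s : Set F}
    (hf : StrictConvexOn 𝕜 s f) (g : E →ᵃ[𝕜] F) (hg : Function.Injective g) :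
    StrictConvexOn 𝕜 (g ⁻¹' s) (f ∘ g) :=
  ⟨hf.1.affine_preimage g, fun x hx y hy hxy a b ha hb hab => by
    simpa only [Function.comp_apply, Convex.combo_affine_apply hab]
      using hf.2 hx hy (hg.ne hxy) ha hb hab⟩

theorem QuadraticMap.PosDef.exists_isMinOn_comp_affineMap {𝕜 E F : Type*} [Field 𝕜]
    [LinearOrder 𝕜] [IsStrictOrderedRing 𝕜] [AddCommGroup E] [Module 𝕜 E]
    [FiniteDimensional 𝕜 E] [AddCommGroup F] [Module 𝕜 F] {Q : QuadraticForm 𝕜 F}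
    (hQ : Q.PosDef) (g : E →ᵃ[𝕜] F) (hg : Function.Injective g) :
    ∃ z, IsMinOn (Q ∘ g) Set.univ z := by
  set B : LinearMap.BilinForm 𝕜 E := (polarBilin Q).compl₁₂ g.linear g.linear
  have hBself : ∀ m, B m m = 0 → m = 0 := by
    intro m h
    simp only [B, LinearMap.compl₁₂_apply, polarBilin_apply_apply, polar_self, two_smul] at h
    refine g.linear_injective_iff.mpr hg ?_
    rw [map_zero]
    exact hQ.anisotropic _ (by linarith [hQ.nonneg (g.linear m)])
  have hB : B.Nondegenerate := ⟨fun m hm => hBself m (hm m), fun m hm => hBself m (hm m)⟩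
  set z := (B.toDual hB).symm (-((polarBilin Q (g 0)).comp g.linear))
  have hz : ∀ v, polar Q (g z) (g.linear v) = 0 := by
    intro v
    have h := LinearMap.BilinForm.apply_toDual_symm_apply (hB := hB)
      (-((polarBilin Q (g 0)).comp g.linear)) v
    have hgz : g z = g.linear z + g 0 := by simpa using g.map_vadd 0 z
    simp only [B, LinearMap.compl₁₂_apply, polarBilin_apply_apply, LinearMap.neg_apply,
      LinearMap.comp_apply] at h
    rw [hgz, polar_add_left, h, neg_add_cancel]
  refine ⟨z, isMinOn_univ_iff.mpr fun w => ?_⟩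
  have hgw : g w = g z + g.linear (w - z) := by simpa [add_comm] using g.map_vadd z (w - z)
  have h := hz (w - z)
  rw [polar] at h
  rw [Function.comp_apply, Function.comp_apply, hgw]
  linarith [hQ.nonneg (g.linear (w - z))]

theorem Fin.cons_zero_eq_zero_of_forall_eq {M : Type*} [Zero M] {n : ℕ} {T : M → M}
    (hT : T 0 = 0) {f : Fin n → M}
    (hf : ∀ i, f i = T ((Fin.cons 0 f : Fin (n + 1) → M) i.castSucc)) :
    f = 0 := by
  have hcons : ∀ i, (Fin.cons 0 f : Fin (n + 1) → M) i = 0 := by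
    intro i
    induction i using Fin.induction with
    | zero => rfl
    | succ i ih => rw [Fin.cons_succ, hf, ih, hT]
  funext i
  simpa using hcons i.succ

namespace LinearStateSpace

noncomputable def costForm {dx dy dθ : ℕ} (N : ℕ) (Qx : Matrix (Fin dx) (Fin dx) ℝ)
    (Ry : Matrix (Fin dy) (Fin dy) ℝ) (Qθ : Matrix (Fin dθ) (Fin dθ) ℝ) :
    QuadraticForm ℝ ((Fin N → Fin dx → ℝ) × (Fin N → Fin dy → ℝ) × (Fin N → Fin dθ → ℝ)) :=
  (1 / 2 : ℝ) • (QuadraticMap.pi fun _ => Qx⁻¹.toQuadraticForm').prod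
    ((QuadraticMap.pi fun _ => Ry⁻¹.toQuadraticForm').prod
      (QuadraticMap.pi fun _ => Qθ⁻¹.toQuadraticForm'))

theorem costForm_posDef {dx dy dθ : ℕ} (N : ℕ) {Qx : Matrix (Fin dx) (Fin dx) ℝ}
    {Ry : Matrix (Fin dy) (Fin dy) ℝ} {Qθ : Matrix (Fin dθ) (Fin dθ) ℝ}
    (hQx : Qx.PosDef) (hRy : Ry.PosDef) (hQθ : Qθ.PosDef) : (costForm N Qx Ry Qθ).PosDef :=
  .smul (.prod (QuadraticMap.posDef_pi_iff.mpr fun _ => hQx.inv.toQuadraticForm')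
    (.prod (QuadraticMap.posDef_pi_iff.mpr fun _ => hRy.inv.toQuadraticForm')
      (QuadraticMap.posDef_pi_iff.mpr fun _ => hQθ.inv.toQuadraticForm'))) (by norm_num)

section Residual

variable {dx dy dθ N : ℕ} (Fx : Matrix (Fin dx) (Fin dx) ℝ) (Fθ : Matrix (Fin dx) (Fin dθ) ℝ)
  (H : Matrix (Fin dy) (Fin dx) ℝ)

def residual (x₀ : Fin dx → ℝ) (θ₀ : Fin dθ → ℝ) (y : Fin N → Fin dy → ℝ)
    (z : (Fin N → Fin dx → ℝ) × (Fin N → Fin dθ → ℝ)) :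
    (Fin N → Fin dx → ℝ) × (Fin N → Fin dy → ℝ) × (Fin N → Fin dθ → ℝ) :=
  let Xp : Fin (N + 1) → Fin dx → ℝ := Fin.cons x₀ z.1
  let Θp : Fin (N + 1) → Fin dθ → ℝ := Fin.cons θ₀ z.2
  (fun i => Xp i.succ - Fx *ᵥ Xp i.castSucc - Fθ *ᵥ Θp i.castSucc,
   fun i => y i - H *ᵥ Xp i.succ,
   fun i => Θp i.succ - Θp i.castSucc)

theorem residual_add (x₀ x₀' : Fin dx → ℝ) (θ₀ θ₀' : Fin dθ → ℝ) (y y' : Fin N → Fin dy → ℝ)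
    (z z' : (Fin N → Fin dx → ℝ) × (Fin N → Fin dθ → ℝ)) :
    residual Fx Fθ H (x₀ + x₀') (θ₀ + θ₀') (y + y') (z + z') =
      residual Fx Fθ H x₀ θ₀ y z + residual Fx Fθ H x₀' θ₀' y' z' := by
  have hcons : ∀ {d} (a b : Fin d → ℝ) (f g : Fin N → Fin d → ℝ),
      (Fin.cons (a + b) (f + g) : Fin (N + 1) → Fin d → ℝ) = Fin.cons a f + Fin.cons b g :=
    fun a b f g => (Matrix.cons_add_cons a f b g).symm
  simp only [residual, Prod.fst_add, Prod.snd_add, hcons]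
  refine Prod.ext ?_ (Prod.ext ?_ ?_) <;> funext i <;>
    simp only [Pi.add_apply, mulVec_add, Prod.fst_add, Prod.snd_add] <;> abel

theorem residual_smul (c : ℝ) (x₀ : Fin dx → ℝ) (θ₀ : Fin dθ → ℝ) (y : Fin N → Fin dy → ℝ)
    (z : (Fin N → Fin dx → ℝ) × (Fin N → Fin dθ → ℝ)) :
    residual Fx Fθ H (c • x₀) (c • θ₀) (c • y) (c • z) = c • residual Fx Fθ H x₀ θ₀ y z := by
  have hcons : ∀ {d} (a : Fin d → ℝ) (f : Fin N → Fin d → ℝ),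
      (Fin.cons (c • a) (c • f) : Fin (N + 1) → Fin d → ℝ) = c • Fin.cons a f :=
    fun a f => (Matrix.smul_cons c a f).symm
  simp only [residual, Prod.smul_fst, Prod.smul_snd, hcons]
  refine Prod.ext ?_ (Prod.ext ?_ ?_) <;> funext i <;>
    simp only [Pi.smul_apply, mulVec_smul, Prod.smul_fst, Prod.smul_snd, smul_sub]

def residualLinear :
    ((Fin N → Fin dx → ℝ) × (Fin N → Fin dθ → ℝ)) →ₗ[ℝ]
      ((Fin N → Fin dx → ℝ) × (Fin N → Fin dy → ℝ) × (Fin N → Fin dθ → ℝ)) where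
  toFun := residual Fx Fθ H 0 0 0
  map_add' z z' := by simpa using residual_add Fx Fθ H 0 0 0 0 0 0 z z'
  map_smul' c z := by simpa using residual_smul Fx Fθ H c 0 0 0 z

def residualAffine (x₀ : Fin dx → ℝ) (θ₀ : Fin dθ → ℝ) (y : Fin N → Fin dy → ℝ) :
    ((Fin N → Fin dx → ℝ) × (Fin N → Fin dθ → ℝ)) →ᵃ[ℝ]
      ((Fin N → Fin dx → ℝ) × (Fin N → Fin dy → ℝ) × (Fin N → Fin dθ → ℝ)) where
  toFun := residual Fx Fθ H x₀ θ₀ y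
  linear := residualLinear Fx Fθ H
  map_vadd' z v := by simpa [residualLinear] using residual_add Fx Fθ H 0 x₀ 0 θ₀ 0 y v z

theorem residualLinear_injective :
    Function.Injective (residualLinear (dy := dy) (N := N) Fx Fθ H) := by
  rw [← LinearMap.ker_eq_bot, LinearMap.ker_eq_bot']
  rintro ⟨X, Θ⟩ h
  simp only [residualLinear, LinearMap.coe_mk, AddHom.coe_mk, residual, Fin.cons_succ,
    Prod.mk_eq_zero] at h
  obtain ⟨hX, -, hΘ⟩ := h
  have hΘ0 : Θ = 0 := Fin.cons_zero_eq_zero_of_forall_eq (T := id) rfl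
    fun i => sub_eq_zero.mp (congrFun hΘ i)
  subst hΘ0
  have hcons : (Fin.cons 0 0 : Fin (N + 1) → Fin dθ → ℝ) = 0 := Matrix.cons_zero_zero
  have hX0 : X = 0 := Fin.cons_zero_eq_zero_of_forall_eq (T := (Fx *ᵥ ·)) (mulVec_zero Fx)
    fun i => by simpa [hcons, sub_eq_zero] using congrFun hX i
  rw [hX0, Prod.mk_zero_zero]

end Residual

end LinearStateSpace

open LinearStateSpace in
/-- Strict convexity and unique global minimizer of the full sequential cost (9) in
the linear case `f_o(x,θ) = Fx·x + Fθ·θ`, `h(x) = H·x`, with fixed initial values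
`x₀, θ₀`. Here `Xp = Fin.cons x₀ X : Fin (N+1) → _` is the state trajectory
prepended with the initial state, so `Xp i.succ = xᵢ₊₁` and `Xp i.castSucc = xᵢ`,
and similarly for the parameters. -/
theorem stmt_13 {dx dy dθ N : ℕ}
    (Qx : Matrix (Fin dx) (Fin dx) ℝ) (Ry : Matrix (Fin dy) (Fin dy) ℝ)
    (Qθ : Matrix (Fin dθ) (Fin dθ) ℝ)
    (hQx : Qx.PosDef) (hRy : Ry.PosDef) (hQθ : Qθ.PosDef)
    (Fx : Matrix (Fin dx) (Fin dx) ℝ) (Fθ : Matrix (Fin dx) (Fin dθ) ℝ)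
    (H : Matrix (Fin dy) (Fin dx) ℝ)
    (x₀ : Fin dx → ℝ) (θ₀ : Fin dθ → ℝ) (y : Fin N → Fin dy → ℝ)
    (L : ((Fin N → Fin dx → ℝ) × (Fin N → Fin dθ → ℝ)) → ℝ)
    (hL : ∀ (X : Fin N → Fin dx → ℝ) (Θ : Fin N → Fin dθ → ℝ),
      L (X, Θ) = (1 / 2) * ∑ i : Fin N,
        let Xp : Fin (N + 1) → Fin dx → ℝ := Fin.cons x₀ X
        let Θp : Fin (N + 1) → Fin dθ → ℝ := Fin.cons θ₀ Θ
        (Xp i.succ - Fx *ᵥ Xp i.castSucc - Fθ *ᵥ Θp i.castSucc) ⬝ᵥ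
          (Qx⁻¹ *ᵥ (Xp i.succ - Fx *ᵥ Xp i.castSucc - Fθ *ᵥ Θp i.castSucc))
        + (y i - H *ᵥ Xp i.succ) ⬝ᵥ (Ry⁻¹ *ᵥ (y i - H *ᵥ Xp i.succ))
        + (Θp i.succ - Θp i.castSucc) ⬝ᵥ (Qθ⁻¹ *ᵥ (Θp i.succ - Θp i.castSucc))) :
    StrictConvexOn ℝ Set.univ L ∧ ∃! z, ∀ w, L z ≤ L w := by
  set g := residualAffine Fx Fθ H x₀ θ₀ y
  have hg : Function.Injective g := g.linear_injective_iff.mp (residualLinear_injective Fx Fθ H)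
  have hQ := costForm_posDef N hQx hRy hQθ
  obtain rfl : L = costForm N Qx Ry Qθ ∘ g := by
    funext ⟨X, Θ⟩
    simp only [hL, Function.comp_apply, g, residualAffine, AffineMap.coe_mk,
      LinearStateSpace.residual, costForm, _root_.smul_apply, QuadraticMap.prod_apply,
      QuadraticMap.pi_apply, Matrix.toQuadraticForm', LinearMap.BilinMap.toQuadraticMap_apply,
      Matrix.toLinearMap₂'_apply', smul_eq_mul, Finset.sum_add_distrib, add_assoc]
  have hconv := hQ.strictConvexOn.comp_affineMap_of_injective g hg
  obtain ⟨z, hz⟩ := hQ.exists_isMinOn_comp_affineMap g hg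
  exact ⟨hconv, z, isMinOn_univ_iff.mp hz, fun w hw =>
    hconv.eq_of_isMinOn (isMinOn_univ_iff.mpr hw) hz trivial trivial⟩
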